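/- Binet-type formula for q-Chebyshev polynomials of the second kind: U_n(x,s,q) = ∑_{k=0}^{⌊(n+1)/2⌋} q^{\binom{n-2k}{2}}·[n+1 choose 2k+1]_q·x^{n-2k}·∏_{j=0}^{k-1}(x² + q^{2j+1}s), where U_n is defined by U_0 = 1, U_1 = (1+q)x, U_n = (1+q^n)x·U_{n-1} + q^{n-1}s·U_{n-2}. -/

import Mathlib

/-!
Both sides satisfy the recurrence of `chebU`. Write the `k`-th summand as a Gaussian binomial
times `x ^ (n - 2k) * P k`, where `P k = ∏_{j<k} (x² + q^(2j+1) s)`. Since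
`q^(2k+1) s P k = P (k+1) - x² P k`, the term `q^(n+1) s U_n` contributes to the `k`-th and to the
`(k+1)`-st summand of `U_(n+2)`. Moving the second contribution into a telescoping defect, the
recurrence becomes a summand-wise identity, which for the generic summand is a three-term relation
between Gaussian binomials that follows from the two q-Pascal rules.
-/

open Finset

noncomputable section

/-- The polynomial ring `ℤ[q,x,s]`. -/
abbrev R : Type := MvPolynomial (Fin 3) ℤ

def q : R := MvPolynomial.X 0
def x : R := MvPolynomial.X 1
def s : R := MvPolynomial.X 2

/-- q-Chebyshev polynomials of the first kind:
`T 0 = 1`, `T 1 = x`, `T n = (1+q^(n-1)) x T (n-1) + q^(n-1) s T (n-2)`. -/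
def chebT : ℕ → R
  | 0 => 1
  | 1 => x
  | (n + 2) => (1 + q ^ (n + 1)) * x * chebT (n + 1) + q ^ (n + 1) * s * chebT n

/-- q-Chebyshev polynomials of the second kind:
`U 0 = 1`, `U 1 = (1+q)x`, `U n = (1+q^n) x U (n-1) + q^(n-1) s U (n-2)`. -/
def chebU : ℕ → R
  | 0 => 1
  | 1 => (1 + q) * x
  | (n + 2) => (1 + q ^ (n + 2)) * x * chebU (n + 1) + q ^ (n + 1) * s * chebU n

/-- The Gaussian binomial coefficient `[n choose k]_q` as a polynomial in `q`,
via the Pascal recursion `[n+1, k+1] = [n, k+1] + q^(n-k) [n, k]`. -/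
def gbinom : ℕ → ℕ → R
  | _, 0 => 1
  | 0, _ + 1 => 0
  | (n + 1), (k + 1) => gbinom n (k + 1) + q ^ (n - k) * gbinom n k

lemma gbinom_zero_right (n : ℕ) : gbinom n 0 = 1 := by cases n <;> rfl

lemma gbinom_succ_succ (n k : ℕ) :
    gbinom (n + 1) (k + 1) = gbinom n (k + 1) + q ^ (n - k) * gbinom n k := rfl

lemma gbinom_eq_zero_of_lt : ∀ {n k : ℕ}, n < k → gbinom n k = 0
  | 0, _ + 1, _ => rfl
  | n + 1, k + 1, h => by
    rw [gbinom_succ_succ, gbinom_eq_zero_of_lt (by omega : n < k + 1),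
      gbinom_eq_zero_of_lt (by omega : n < k), mul_zero, add_zero]

lemma gbinom_self : ∀ n : ℕ, gbinom n n = 1
  | 0 => rfl
  | n + 1 => by rw [gbinom_succ_succ, gbinom_eq_zero_of_lt n.lt_succ_self, gbinom_self n]; simp

lemma gbinom_succ_succ' : ∀ n k : ℕ,
    gbinom (n + 1) (k + 1) = q ^ (k + 1) * gbinom n (k + 1) + gbinom n k
  | 0, 0 => by simp [gbinom]
  | 0, k + 1 => by simp [gbinom]
  | n + 1, 0 => by
    have := gbinom_succ_succ' n 0
    simp only [gbinom_succ_succ, gbinom_zero_right, Nat.sub_zero] at this ⊢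
    linear_combination this
  | n + 1, k + 1 => by
    -- both exponents are `n + 1`, unless `gbinom n (k + 1) = 0`
    have hexp : q ^ (k + 2) * q ^ (n - (k + 1)) * gbinom n (k + 1)
        = q ^ (n - k) * q ^ (k + 1) * gbinom n (k + 1) := by
      rcases lt_or_ge k n with h | h
      · rw [← pow_add, ← pow_add, show k + 2 + (n - (k + 1)) = n - k + (k + 1) by omega]
      · rw [gbinom_eq_zero_of_lt (by omega), mul_zero, mul_zero]
    have h₁ := gbinom_succ_succ (n + 1) (k + 1)
    rw [Nat.add_sub_add_right] at h₁
    linear_combination h₁ + q ^ (n - k) * gbinom_succ_succ' n k + gbinom_succ_succ' n (k + 1)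
      - q ^ (k + 2) * gbinom_succ_succ n (k + 1) - gbinom_succ_succ n k - hexp

lemma q_pow_succ_sub_one_mul_gbinom_succ (n k : ℕ) :
    (q ^ (k + 1) - 1) * gbinom n (k + 1) = (q ^ (n - k) - 1) * gbinom n k := by
  linear_combination gbinom_succ_succ n k - gbinom_succ_succ' n k

lemma gbinom_three_term (k m : ℕ) :
    q ^ (m + 1) * gbinom (k + m + 3) (k + 1)
      = (1 + q ^ (k + m + 2)) * gbinom (k + m + 2) (k + 1) - gbinom (k + m + 1) (k + 1)
        + q ^ (m + 1) * (gbinom (k + m + 2) k - gbinom (k + m + 1) k) := by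
  have h₁ := gbinom_succ_succ (k + m + 2) k
  have h₂ := gbinom_succ_succ (k + m + 1) k
  have h₃ := q_pow_succ_sub_one_mul_gbinom_succ (k + m + 2) k
  rw [show k + m + 2 - k = m + 2 by omega] at h₁ h₃
  rw [show k + m + 1 - k = m + 1 by omega] at h₂
  linear_combination q ^ (m + 1) * h₁ - h₂ - q ^ (m + 1) * h₃

lemma gbinom_succ_self : ∀ n : ℕ, gbinom (n + 1) n = ∑ i ∈ range (n + 1), q ^ i
  | 0 => by simp [gbinom_zero_right]
  | n + 1 => by
    rw [gbinom_succ_succ, gbinom_self, Nat.add_sub_cancel_left, gbinom_succ_self n,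
      geom_sum_succ (n := n + 1), pow_one, add_comm]

def binetProd (k : ℕ) : R := ∏ j ∈ range k, (x ^ 2 + q ^ (2 * j + 1) * s)

def binetTerm (n k : ℕ) : R :=
  q ^ (n - 2 * k).choose 2 * gbinom (n + 1) (2 * k + 1) * x ^ (n - 2 * k) * binetProd k

/-- By q-Pascal this is `q ^ (n + 2 - 2k) * gbinom (n + 1) (2k - 1)` for `k ≥ 1`
(`binetDefect_succ`); the difference form makes it vanish at `k = 0`. -/
def binetDefect (n k : ℕ) : R :=
  q ^ (n + 2 - 2 * k).choose 2 * (gbinom (n + 2) (2 * k) - gbinom (n + 1) (2 * k)) *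
    x ^ (n + 2 - 2 * k) * binetProd k

lemma binetProd_succ (k : ℕ) :
    binetProd (k + 1) = binetProd k * (x ^ 2 + q ^ (2 * k + 1) * s) :=
  prod_range_succ _ k

lemma binetTerm_eq_zero_of_lt {n k : ℕ} (h : n < 2 * k) : binetTerm n k = 0 := by
  rw [binetTerm, gbinom_eq_zero_of_lt (by omega), mul_zero, zero_mul, zero_mul]

lemma binetDefect_eq_zero_of_lt {n k : ℕ} (h : n + 2 < 2 * k) : binetDefect n k = 0 := by
  rw [binetDefect, gbinom_eq_zero_of_lt h, gbinom_eq_zero_of_lt (by omega), sub_zero,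
    mul_zero, zero_mul, zero_mul]

lemma binetDefect_zero_right (n : ℕ) : binetDefect n 0 = 0 := by
  simp [binetDefect, gbinom_zero_right]

lemma binetDefect_succ (n k : ℕ) :
    binetDefect n (k + 1) = q ^ ((n - 2 * k).choose 2 + (n - 2 * k)) *
      gbinom (n + 1) (2 * k + 1) * x ^ (n - 2 * k) * binetProd (k + 1) := by
  rw [binetDefect, show n + 2 - 2 * (k + 1) = n - 2 * k by omega,
    show 2 * (k + 1) = 2 * k + 1 + 1 by ring, gbinom_succ_succ (n + 1), add_sub_cancel_left,
    Nat.add_sub_add_right, pow_add]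
  ring

lemma binetTerm_recurrence (n k : ℕ) :
    binetTerm (n + 2) k = (1 + q ^ (n + 2)) * x * binetTerm (n + 1) k
      + q ^ (n + 1) * s * binetTerm n k + (binetDefect n k - binetDefect n (k + 1)) := by
  rcases le_or_gt (2 * k) n with h | h
  · obtain ⟨m, rfl⟩ := Nat.exists_eq_add_of_le h
    have key := gbinom_three_term (2 * k) m
    rw [binetDefect_succ]
    simp only [binetTerm, binetDefect, binetProd_succ, add_assoc, Nat.add_sub_cancel_left,
      Nat.reduceAdd, Nat.choose_succ_succ', Nat.choose_zero_right, Nat.choose_one_right] at key ⊢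
    linear_combination q ^ (m.choose 2 + m) * x ^ (m + 2) * binetProd k * key
  -- otherwise `binetTerm n k = 0` and `binetTerm (n + 2) k` is zero or one of the top two summands
  obtain ⟨j, rfl⟩ : ∃ j, k = j + 1 := ⟨k - 1, by omega⟩
  rcases (by omega : n + 2 < 2 * (j + 1) ∨ n = 2 * j ∨ n = 2 * j + 1) with h | rfl | rfl
  · simp (disch := omega) only [binetTerm_eq_zero_of_lt, binetDefect_eq_zero_of_lt]
    ring
  · simp (disch := omega) only [binetTerm_eq_zero_of_lt, binetDefect_eq_zero_of_lt]
    simp [binetTerm, binetDefect_succ, mul_add, gbinom_self]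
  · simp (disch := omega) only [binetTerm_eq_zero_of_lt, binetDefect_eq_zero_of_lt]
    simp only [binetTerm, binetDefect_succ, gbinom_self, gbinom_succ_self, add_assoc, mul_add,
      mul_one, Nat.reduceAdd, Nat.reduceSubDiff, add_tsub_cancel_left, tsub_self,
      Nat.choose_succ_self, Nat.choose_zero_succ, pow_zero, pow_one, one_mul, mul_zero, add_zero,
      zero_add, sub_zero]
    rw [geom_sum_succ', geom_sum_succ]
    ring

lemma sum_binetTerm_recurrence {n N : ℕ} (h : n + 2 < 2 * N) :
    ∑ k ∈ range N, binetTerm (n + 2) k =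
      (1 + q ^ (n + 2)) * x * ∑ k ∈ range N, binetTerm (n + 1) k
        + q ^ (n + 1) * s * ∑ k ∈ range N, binetTerm n k := by
  simp only [binetTerm_recurrence, sum_add_distrib, mul_sum, sum_range_sub',
    binetDefect_zero_right, binetDefect_eq_zero_of_lt h, sub_zero, add_zero]

theorem chebU_eq_sum_binetTerm :
    ∀ {n N : ℕ}, n < 2 * N → chebU n = ∑ k ∈ range N, binetTerm n k
  | 0, N, h | 1, N, h => by
    rw [sum_eq_single_of_mem 0 (mem_range.2 (by omega))
      fun k _ hk => binetTerm_eq_zero_of_lt (by omega)]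
    simp [chebU, binetTerm, binetProd, gbinom]
  | n + 2, N, h => by
    rw [chebU, chebU_eq_sum_binetTerm (N := N) (by omega),
      chebU_eq_sum_binetTerm (N := N) (by omega),
      sum_binetTerm_recurrence h]

/-- Binet-type formula for the q-Chebyshev polynomials of the second kind.
(For odd `n` the boundary term `k = (n+1)/2` vanishes since `[n+1 choose n+2]_q = 0`.) -/
theorem chebU_binet (n : ℕ) :
    chebU n = ∑ k ∈ range ((n + 1) / 2 + 1),
      q ^ Nat.choose (n - 2 * k) 2 * gbinom (n + 1) (2 * k + 1) * x ^ (n - 2 * k) *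
        ∏ j ∈ range k, (x ^ 2 + q ^ (2 * j + 1) * s) :=
  chebU_eq_sum_binetTerm (by omega)

end
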